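/- Let Γ be a subgroup of SL(2,ℝ), r a nonnegative integer, D an open subset of ℍ stable under the action of Γ, and g an analytic function on D satisfying g(γ·z) = (cz+d)^{2(r+1)} g(z) for all γ = [[a,b],[c,d]] ∈ Γ and z ∈ D. Let V_r(D) be the ℂ-vector space of analytic functions f on D with f^{(r+1)} + g f = 0 on D. Then for each γ ∈ Γ, the map ρ_r(γ) : f ↦ f|_{−r}γ⁻¹ is a ℂ-linear bijection of V_r(D) onto itself, and γ ↦ ρ_r(γ) is a group homomorphism: ρ_r(γ₁γ₂) = ρ_r(γ₁) ∘ ρ_r(γ₂) for all γ₁, γ₂ ∈ Γ. -/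

import Mathlib

/-- The automorphy factor `cz + d` for `γ = [[a,b],[c,d]] ∈ SL(2,ℝ)`. -/
noncomputable def jfac (γ : Matrix.SpecialLinearGroup (Fin 2) ℝ) (z : ℂ) : ℂ :=
  (((γ : Matrix (Fin 2) (Fin 2) ℝ) 1 0 : ℝ) : ℂ) * z +
    (((γ : Matrix (Fin 2) (Fin 2) ℝ) 1 1 : ℝ) : ℂ)

/-- The Möbius action `γ·z = (az+b)/(cz+d)` of `γ ∈ SL(2,ℝ)` on `z ∈ ℂ`. -/
noncomputable def moebius (γ : Matrix.SpecialLinearGroup (Fin 2) ℝ) (z : ℂ) : ℂ :=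
  ((((γ : Matrix (Fin 2) (Fin 2) ℝ) 0 0 : ℝ) : ℂ) * z +
    (((γ : Matrix (Fin 2) (Fin 2) ℝ) 0 1 : ℝ) : ℂ)) / jfac γ z

/-- The weight `-r` slash operator: `f|₋ᵣγ (z) = (cz+d)^r f(γ·z)`. -/
noncomputable def slashNegWt (r : ℕ) (γ : Matrix.SpecialLinearGroup (Fin 2) ℝ)
    (f : ℂ → ℂ) (z : ℂ) : ℂ :=
  (jfac γ z) ^ r * f (moebius γ z)

/-- Membership in the solution space `V_r(D)` of `f^{(r+1)} + g f = 0`. -/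
def MemSolSpace (r : ℕ) (D : Set ℂ) (g f : ℂ → ℂ) : Prop :=
  AnalyticOnNhd ℂ f D ∧ ∀ z ∈ D, iteratedDeriv (r + 1) f z + g z * f z = 0

/-! The heart of the matter is Bol's identity `(f|₋ᵣδ)^{(r+1)} = (cz+d)^{-(r+2)} f^{(r+1)}(δz)`,
proved by induction on `r`: writing `f|₋₍ᵣ₊₁₎δ = (cz+d) · f|₋ᵣδ`, Leibniz's rule for an affine
factor together with the induction hypothesis makes the two terms proportional to
`c (cz+d)^{-(r+2)} f^{(r+1)}(δz)` cancel. Since `g` is automorphic of weight `2(r+1)`, Bol's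
identity shows that `f ↦ f|₋ᵣδ` preserves the equation `f^{(r+1)} + g f = 0`. The cocycle relation
`j(δ₁δ₂, z) = j(δ₁, δ₂z) j(δ₂, z)` makes the slash operator a right action, which gives
bijectivity and the homomorphism property. -/

open Filter Topology
open scoped MatrixGroups

section Leibniz

variable {𝕜 : Type*} [NontriviallyNormedField 𝕜] [CompleteSpace 𝕜]

theorem AnalyticAt.hasDerivAt_iteratedDeriv {H : 𝕜 → 𝕜} {z : 𝕜} (hH : AnalyticAt 𝕜 H z)
    (n : ℕ) : HasDerivAt (iteratedDeriv n H) (iteratedDeriv (n + 1) H z) z := by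
  have hd : DifferentiableAt 𝕜 (iteratedDeriv n H) z := by
    rw [iteratedDeriv_eq_iterate]
    exact (hH.iterated_deriv n).differentiableAt
  rw [iteratedDeriv_succ]
  exact hd.hasDerivAt

theorem iteratedDeriv_succ_affine_mul {H : 𝕜 → 𝕜} (c d : 𝕜) (n : ℕ) {z : 𝕜}
    (hH : AnalyticAt 𝕜 H z) :
    iteratedDeriv (n + 1) (fun w => (c * w + d) * H w) z =
      (c * z + d) * iteratedDeriv (n + 1) H z + (n + 1) * c * iteratedDeriv n H z := by
  induction n generalizing z with
  | zero =>
    have h := (((hasDerivAt_id' z).const_mul c).add_const d).fun_mul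
      hH.differentiableAt.hasDerivAt
    rw [iteratedDeriv_one, h.deriv, iteratedDeriv_one, iteratedDeriv_zero]
    ring
  | succ n ih =>
    have hev : iteratedDeriv (n + 1) (fun w => (c * w + d) * H w) =ᶠ[𝓝 z]
        fun w => (c * w + d) * iteratedDeriv (n + 1) H w + (n + 1) * c * iteratedDeriv n H w :=
      hH.eventually_analyticAt.mono fun w hw => ih hw
    have h := ((((hasDerivAt_id' z).const_mul c).add_const d).fun_mul
      (hH.hasDerivAt_iteratedDeriv (n + 1))).fun_add
      ((hH.hasDerivAt_iteratedDeriv n).const_mul ((n + 1) * c))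
    rw [iteratedDeriv_succ, hev.deriv_eq, h.deriv]
    push_cast
    ring

end Leibniz

theorem jfac_ne_zero (δ : SL(2, ℝ)) {z : ℂ} (hz : 0 < z.im) : jfac δ z ≠ 0 := by
  intro h
  have hc : δ 1 0 = 0 := by
    have him := congrArg Complex.im h
    simp only [jfac, Complex.add_im, Complex.mul_im, Complex.ofReal_re, Complex.ofReal_im,
      zero_mul, add_zero, Complex.zero_im] at him
    exact (mul_eq_zero.1 him).resolve_right hz.ne'
  have hd : δ 1 1 = 0 := by
    simpa [jfac, hc] using congrArg Complex.re h
  have hdet := δ.det_coe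
  rw [Matrix.det_fin_two] at hdet
  simp [hc, hd] at hdet

theorem jfac_one (z : ℂ) : jfac 1 z = 1 := by
  simp [jfac]

theorem moebius_one (z : ℂ) : moebius 1 z = z := by
  simp [moebius, jfac_one]

theorem jfac_mul (δ₁ δ₂ : SL(2, ℝ)) {z : ℂ} (h : jfac δ₂ z ≠ 0) :
    jfac (δ₁ * δ₂) z = jfac δ₁ (moebius δ₂ z) * jfac δ₂ z := by
  simp only [jfac, moebius, Matrix.SpecialLinearGroup.coe_mul, Matrix.mul_apply,
    Fin.sum_univ_two, Complex.ofReal_add, Complex.ofReal_mul] at h ⊢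
  field_simp
  ring

theorem moebius_mul (δ₁ δ₂ : SL(2, ℝ)) {z : ℂ} (h : jfac δ₂ z ≠ 0) :
    moebius (δ₁ * δ₂) z = moebius δ₁ (moebius δ₂ z) := by
  rw [moebius, moebius, jfac_mul δ₁ δ₂ h, mul_comm (jfac δ₁ _), ← div_div]
  congr 1
  rw [div_eq_iff h]
  simp only [jfac, moebius, Matrix.SpecialLinearGroup.coe_mul, Matrix.mul_apply,
    Fin.sum_univ_two, Complex.ofReal_add, Complex.ofReal_mul] at h ⊢
  field_simp
  ring

theorem hasDerivAt_jfac (δ : SL(2, ℝ)) (z : ℂ) : HasDerivAt (jfac δ) (δ 1 0 : ℂ) z :=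
  (((hasDerivAt_id' z).const_mul _).add_const _).congr_deriv (mul_one _)

theorem hasDerivAt_moebius (δ : SL(2, ℝ)) {z : ℂ} (hz : jfac δ z ≠ 0) :
    HasDerivAt (moebius δ) (jfac δ z ^ (-2 : ℤ)) z := by
  have hdet : ((δ 0 0 : ℝ) : ℂ) * (δ 1 1 : ℝ) - (δ 0 1 : ℝ) * (δ 1 0 : ℝ) = 1 := by
    have h := δ.det_coe
    rw [Matrix.det_fin_two] at h
    exact_mod_cast h
  have h := (((hasDerivAt_id' z).const_mul ((δ 0 0 : ℝ) : ℂ)).add_const ((δ 0 1 : ℝ) : ℂ)).div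
    (hasDerivAt_jfac δ z) hz
  refine h.congr_deriv ?_
  rw [zpow_neg, zpow_ofNat, div_eq_iff (pow_ne_zero 2 hz)]
  simp only [jfac] at hz ⊢
  field_simp
  linear_combination hdet

theorem analyticAt_jfac (δ : SL(2, ℝ)) (z : ℂ) : AnalyticAt ℂ (jfac δ) z :=
  (analyticAt_const.mul analyticAt_id).add analyticAt_const

theorem analyticAt_moebius (δ : SL(2, ℝ)) {z : ℂ} (hz : jfac δ z ≠ 0) :
    AnalyticAt ℂ (moebius δ) z :=
  ((analyticAt_const.mul analyticAt_id).add analyticAt_const).div (analyticAt_jfac δ z) hz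

theorem analyticAt_slashNegWt (r : ℕ) (δ : SL(2, ℝ)) {f : ℂ → ℂ} {z : ℂ} (hz : jfac δ z ≠ 0)
    (hf : AnalyticAt ℂ f (moebius δ z)) : AnalyticAt ℂ (slashNegWt r δ f) z :=
  ((analyticAt_jfac δ z).pow r).mul (hf.comp (analyticAt_moebius δ hz))

theorem eventually_jfac_ne_zero_and_analyticAt_moebius (δ : SL(2, ℝ)) {F : ℂ → ℂ} {z : ℂ}
    (hz : jfac δ z ≠ 0) (hF : AnalyticAt ℂ F (moebius δ z)) :
    ∀ᶠ w in 𝓝 z, jfac δ w ≠ 0 ∧ AnalyticAt ℂ F (moebius δ w) :=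
  ((analyticAt_jfac δ z).continuousAt.eventually_ne hz).and
    ((analyticAt_moebius δ hz).continuousAt.eventually hF.eventually_analyticAt)

theorem hasDerivAt_jfac_zpow_mul_comp_moebius (δ : SL(2, ℝ)) (m : ℤ) {G : ℂ → ℂ} {G' z : ℂ}
    (hz : jfac δ z ≠ 0) (hG : HasDerivAt G G' (moebius δ z)) :
    HasDerivAt (fun w => jfac δ w ^ m * G (moebius δ w))
      (m * δ 1 0 * jfac δ z ^ (m - 1) * G (moebius δ z) + jfac δ z ^ (m - 2) * G') z := by
  have h := ((hasDerivAt_zpow m _ (Or.inl hz)).comp z (hasDerivAt_jfac δ z)).fun_mul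
    (hG.comp z (hasDerivAt_moebius δ hz))
  refine h.congr_deriv ?_
  rw [sub_eq_add_neg m 2, zpow_add₀ hz]
  simp only [Function.comp_apply]
  ring

theorem iteratedDeriv_slashNegWt (r : ℕ) (δ : SL(2, ℝ)) {F : ℂ → ℂ} {z : ℂ}
    (hz : jfac δ z ≠ 0) (hF : AnalyticAt ℂ F (moebius δ z)) :
    iteratedDeriv (r + 1) (slashNegWt r δ F) z =
      jfac δ z ^ (-(r + 2 : ℤ)) * iteratedDeriv (r + 1) F (moebius δ z) := by
  induction r generalizing z with
  | zero =>
    have h := hasDerivAt_jfac_zpow_mul_comp_moebius δ 0 hz hF.differentiableAt.hasDerivAt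
    simp only [zpow_zero, one_mul] at h
    have hS : slashNegWt 0 δ F = fun w => F (moebius δ w) := by
      funext w
      simp [slashNegWt]
    rw [iteratedDeriv_one, hS, h.deriv, iteratedDeriv_one]
    norm_num
  | succ r ih =>
    set m : ℤ := -(r + 2 : ℤ)
    have hS : slashNegWt (r + 1) δ F =
        fun w => ((δ 1 0 : ℂ) * w + (δ 1 1 : ℂ)) * slashNegWt r δ F w := by
      funext w
      simp only [slashNegWt, jfac, pow_succ']
      ring
    have hev : iteratedDeriv (r + 1) (slashNegWt r δ F) =ᶠ[𝓝 z]
        fun w => jfac δ w ^ m * iteratedDeriv (r + 1) F (moebius δ w) :=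
      (eventually_jfac_ne_zero_and_analyticAt_moebius δ hz hF).mono fun w hw => ih hw.1 hw.2
    have hderiv := hasDerivAt_jfac_zpow_mul_comp_moebius δ m hz
      (hF.hasDerivAt_iteratedDeriv (r + 1))
    rw [hS, iteratedDeriv_succ_affine_mul _ _ _ (analyticAt_slashNegWt r δ hz hF),
      iteratedDeriv_succ, hev.deriv_eq, hderiv.deriv, ih hz hF]
    have hJm : jfac δ z ^ m = jfac δ z * jfac δ z ^ (m - 1) := by
      rw [← zpow_one_add₀ hz]
      ring_nf
    have hJm₁ : jfac δ z ^ (m - 1) = jfac δ z * jfac δ z ^ (m - 2) := by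
      rw [← zpow_one_add₀ hz]
      ring_nf
    have hexp : -(((r + 1 : ℕ) : ℤ) + 2) = m - 1 := by
      push_cast
      ring
    rw [hexp, hJm, hJm₁]
    simp only [m, jfac]
    push_cast
    ring

theorem slashNegWt_one (r : ℕ) (f : ℂ → ℂ) : slashNegWt r 1 f = f := by
  funext z
  simp [slashNegWt, jfac_one, moebius_one]

theorem slashNegWt_mul (r : ℕ) (δ₁ δ₂ : SL(2, ℝ)) (f : ℂ → ℂ) {z : ℂ} (h : jfac δ₂ z ≠ 0) :
    slashNegWt r (δ₁ * δ₂) f z = slashNegWt r δ₂ (slashNegWt r δ₁ f) z := by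
  simp only [slashNegWt, jfac_mul δ₁ δ₂ h, moebius_mul δ₁ δ₂ h, mul_pow]
  ring

theorem slashNegWt_inv_slashNegWt (r : ℕ) (δ : SL(2, ℝ)) (f : ℂ → ℂ) {z : ℂ}
    (h : jfac δ⁻¹ z ≠ 0) : slashNegWt r δ⁻¹ (slashNegWt r δ f) z = f z := by
  rw [← slashNegWt_mul r δ δ⁻¹ f h, mul_inv_cancel, slashNegWt_one]

theorem slashNegWt_slashNegWt_inv (r : ℕ) (δ : SL(2, ℝ)) (f : ℂ → ℂ) {z : ℂ}
    (h : jfac δ z ≠ 0) : slashNegWt r δ (slashNegWt r δ⁻¹ f) z = f z := by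
  rw [← slashNegWt_mul r δ⁻¹ δ f h, inv_mul_cancel, slashNegWt_one]

theorem memSolSpace_slashNegWt {r : ℕ} {D : Set ℂ} {g f : ℂ → ℂ} {δ : SL(2, ℝ)}
    (hJ : ∀ z ∈ D, jfac δ z ≠ 0) (hmap : ∀ z ∈ D, moebius δ z ∈ D)
    (hauto : ∀ z ∈ D, g (moebius δ z) = jfac δ z ^ (2 * (r + 1)) * g z)
    (hf : MemSolSpace r D g f) : MemSolSpace r D g (slashNegWt r δ f) := by
  refine ⟨fun z hz => analyticAt_slashNegWt r δ (hJ z hz) (hf.1 _ (hmap z hz)), fun z hz => ?_⟩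
  have hode := hf.2 _ (hmap z hz)
  rw [hauto z hz] at hode
  have hpow : jfac δ z ^ (-(r + 2 : ℤ)) * jfac δ z ^ (2 * (r + 1)) = jfac δ z ^ r := by
    rw [← zpow_natCast, ← zpow_natCast, ← zpow_add₀ (hJ z hz)]
    congr 1
    push_cast
    ring
  rw [iteratedDeriv_slashNegWt r δ (hJ z hz) (hf.1 _ (hmap z hz)), slashNegWt]
  linear_combination jfac δ z ^ (-(r + 2 : ℤ)) * hode - g z * f (moebius δ z) * hpow

theorem slash_representation_on_solution_space_general
    (Γ : Subgroup (Matrix.SpecialLinearGroup (Fin 2) ℝ)) (r : ℕ)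
    (D : Set ℂ) (hDH : D ⊆ {z : ℂ | 0 < z.im})
    (hstab : ∀ γ : Γ, ∀ z ∈ D, moebius γ z ∈ D)
    (g : ℂ → ℂ)
    (hauto : ∀ γ : Γ, ∀ z ∈ D, g (moebius γ z) = (jfac γ z) ^ (2 * (r + 1)) * g z) :
    (∀ γ : Γ,
      -- `ρ_r(γ)` maps `V_r(D)` into itself
      (∀ f : ℂ → ℂ, MemSolSpace r D g f → MemSolSpace r D g (slashNegWt r ↑(γ⁻¹) f)) ∧
      -- `ρ_r(γ)` is ℂ-linear
      (∀ f₁ f₂ : ℂ → ℂ, ∀ c : ℂ, ∀ z ∈ D,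
        slashNegWt r ↑(γ⁻¹) (fun w => c * f₁ w + f₂ w) z =
          c * slashNegWt r ↑(γ⁻¹) f₁ z + slashNegWt r ↑(γ⁻¹) f₂ z) ∧
      -- `ρ_r(γ)` is surjective from `V_r(D)` onto `V_r(D)` (as functions on `D`)
      (∀ f : ℂ → ℂ, MemSolSpace r D g f → ∃ f' : ℂ → ℂ, MemSolSpace r D g f' ∧
        ∀ z ∈ D, slashNegWt r ↑(γ⁻¹) f' z = f z) ∧
      -- `ρ_r(γ)` is injective on `V_r(D)` (as functions on `D`)
      (∀ f₁ f₂ : ℂ → ℂ, MemSolSpace r D g f₁ → MemSolSpace r D g f₂ →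
        (∀ z ∈ D, slashNegWt r ↑(γ⁻¹) f₁ z = slashNegWt r ↑(γ⁻¹) f₂ z) →
        ∀ z ∈ D, f₁ z = f₂ z)) ∧
    -- `γ ↦ ρ_r(γ)` is a group homomorphism
    (∀ γ₁ γ₂ : Γ, ∀ f : ℂ → ℂ, ∀ z ∈ D,
      slashNegWt r ↑((γ₁ * γ₂)⁻¹) f z =
        slashNegWt r ↑(γ₁⁻¹) (slashNegWt r ↑(γ₂⁻¹) f) z) := by
  have hJ : ∀ δ : SL(2, ℝ), ∀ z ∈ D, jfac δ z ≠ 0 := fun δ _ hz => jfac_ne_zero δ (hDH hz)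
  refine ⟨fun γ => ⟨?_, ?_, ?_, ?_⟩, ?_⟩
  · exact fun f hf => memSolSpace_slashNegWt (hJ _) (hstab γ⁻¹) (hauto γ⁻¹) hf
  · intro f₁ f₂ c z _
    simp only [slashNegWt]
    ring
  · exact fun f hf => ⟨slashNegWt r γ f, memSolSpace_slashNegWt (hJ _) (hstab γ) (hauto γ) hf,
      fun z hz => slashNegWt_inv_slashNegWt r γ f (hJ _ z hz)⟩
  · intro f₁ f₂ _ _ heq z hz
    calc f₁ z = slashNegWt r γ (slashNegWt r ↑(γ⁻¹) f₁) z :=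
          (slashNegWt_slashNegWt_inv r γ f₁ (hJ _ z hz)).symm
      _ = slashNegWt r γ (slashNegWt r ↑(γ⁻¹) f₂) z :=
          congrArg (jfac γ z ^ r * ·) (heq _ (hstab γ z hz))
      _ = f₂ z := slashNegWt_slashNegWt_inv r γ f₂ (hJ _ z hz)
  · intro γ₁ γ₂ f z hz
    rw [mul_inv_rev, Subgroup.coe_mul]
    exact slashNegWt_mul r _ _ f (hJ _ z hz)

/-- The maps `ρ_r(γ) : f ↦ f|₋ᵣγ⁻¹` are ℂ-linear bijections of `V_r(D)` onto itself and
give a representation of `Γ` on `V_r(D)`. -/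
theorem slash_representation_on_solution_space
    (Γ : Subgroup (Matrix.SpecialLinearGroup (Fin 2) ℝ)) (r : ℕ)
    (D : Set ℂ) (hDo : IsOpen D) (hDH : D ⊆ {z : ℂ | 0 < z.im})
    (hstab : ∀ γ : Γ, ∀ z ∈ D, moebius γ z ∈ D)
    (g : ℂ → ℂ) (hg : AnalyticOnNhd ℂ g D)
    (hauto : ∀ γ : Γ, ∀ z ∈ D, g (moebius γ z) = (jfac γ z) ^ (2 * (r + 1)) * g z) :
    (∀ γ : Γ,
      -- `ρ_r(γ)` maps `V_r(D)` into itself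
      (∀ f : ℂ → ℂ, MemSolSpace r D g f → MemSolSpace r D g (slashNegWt r ↑(γ⁻¹) f)) ∧
      -- `ρ_r(γ)` is ℂ-linear
      (∀ f₁ f₂ : ℂ → ℂ, ∀ c : ℂ, ∀ z ∈ D,
        slashNegWt r ↑(γ⁻¹) (fun w => c * f₁ w + f₂ w) z =
          c * slashNegWt r ↑(γ⁻¹) f₁ z + slashNegWt r ↑(γ⁻¹) f₂ z) ∧
      -- `ρ_r(γ)` is surjective from `V_r(D)` onto `V_r(D)` (as functions on `D`)
      (∀ f : ℂ → ℂ, MemSolSpace r D g f → ∃ f' : ℂ → ℂ, MemSolSpace r D g f' ∧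
        ∀ z ∈ D, slashNegWt r ↑(γ⁻¹) f' z = f z) ∧
      -- `ρ_r(γ)` is injective on `V_r(D)` (as functions on `D`)
      (∀ f₁ f₂ : ℂ → ℂ, MemSolSpace r D g f₁ → MemSolSpace r D g f₂ →
        (∀ z ∈ D, slashNegWt r ↑(γ⁻¹) f₁ z = slashNegWt r ↑(γ⁻¹) f₂ z) →
        ∀ z ∈ D, f₁ z = f₂ z)) ∧
    -- `γ ↦ ρ_r(γ)` is a group homomorphism
    (∀ γ₁ γ₂ : Γ, ∀ f : ℂ → ℂ, ∀ z ∈ D,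
      slashNegWt r ↑((γ₁ * γ₂)⁻¹) f z =
        slashNegWt r ↑(γ₁⁻¹) (slashNegWt r ↑(γ₂⁻¹) f) z) :=
  slash_representation_on_solution_space_general Γ r D hDH hstab g hauto
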